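/- Let τ and τ' be points of the complex upper half-plane and suppose there exists a nonzero complex number λ such that λ·(ℤ + ℤτ') = ℤ + ℤτ as additive subgroups of ℂ. Then there exist integers a, b, c, d with ad − bc = 1 such that τ' = (aτ+b)/(cτ+d). -/

import Mathlib

/-!
Write `λ = cτ + d` and `λτ' = aτ + b`, which is possible since both lie in `ℤ + ℤτ`; then
`τ' = (aτ + b)/(cτ + d)`. The reverse inclusion expresses `1, τ` as integral combinations of
`λ, λτ'`, so the integer matrix `(a b; c d)` is invertible over `ℤ` and its determinant is `±1`.
The sign is fixed by `Im τ' = (ad - bc) Im τ / |cτ + d|²`, as both `τ` and `τ'` lie in `ℍ`.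
-/

open Complex

lemma Complex.im_div_linear (a b c d : ℝ) (z : ℂ) :
    ((a * z + b) / (c * z + d)).im = (a * d - b * c) * z.im / normSq (c * z + d) := by
  simp only [div_im, add_im, mul_im, ofReal_re, ofReal_im, add_re, mul_re]
  ring

lemma Complex.det_pos_of_im_div_linear_pos {a b c d : ℝ} {z : ℂ} (hz : 0 < z.im)
    (h : 0 < ((a * z + b) / (c * z + d)).im) : 0 < a * d - b * c := by
  rw [im_div_linear, div_pos_iff] at h
  rcases h with ⟨hnum, _⟩ | ⟨_, hden⟩
  · exact pos_of_mul_pos_left hnum hz.le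
  · exact absurd hden (normSq_nonneg _).not_gt

lemma Complex.intCast_mul_add_inj {τ : ℂ} (hτ : τ.im ≠ 0) {m n m' n' : ℤ} :
    (m : ℂ) * τ + n = m' * τ + n' ↔ m = m' ∧ n = n' := by
  refine ⟨fun h ↦ ?_, fun ⟨rfl, rfl⟩ ↦ rfl⟩
  have him : (m : ℝ) * τ.im = m' * τ.im := by simpa using congrArg im h
  obtain rfl : m = m' := by exact_mod_cast mul_right_cancel₀ hτ him
  exact ⟨rfl, by exact_mod_cast add_left_cancel h⟩

lemma Complex.isUnit_det_of_closure_pair_eq {τ ω₁ ω₂ : ℂ} (hτ : τ.im ≠ 0)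
    (h : AddSubgroup.closure {ω₁, ω₂} = AddSubgroup.closure {(1 : ℂ), τ}) {a b c d : ℤ}
    (h₁ : ω₁ = c * τ + d) (h₂ : ω₂ = a * τ + b) : IsUnit (a * d - b * c) := by
  have mem (x : ℂ) (hx : x = 1 ∨ x = τ) : ∃ p q : ℤ, p • ω₁ + q • ω₂ = x :=
    AddSubgroup.mem_closure_pair.mp (h ▸ AddSubgroup.subset_closure hx)
  obtain ⟨p, q, hpq⟩ := mem 1 (.inl rfl)
  obtain ⟨r, s, hrs⟩ := mem τ (.inr rfl)
  simp only [zsmul_eq_mul, h₁, h₂] at hpq hrs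
  have e₁ : p * c + q * a = 0 ∧ p * d + q * b = 1 :=
    (intCast_mul_add_inj hτ).mp (by push_cast; linear_combination hpq)
  have e₂ : r * c + s * a = 1 ∧ r * d + s * b = 0 :=
    (intCast_mul_add_inj hτ).mp (by push_cast; linear_combination hrs)
  -- `e₁, e₂` say `(q p; s r) * (a b; c d) = (0 1; 1 0)`; take determinants.
  refine .of_mul_eq_one (p * s - q * r) ?_
  linear_combination (r * c + s * a) * e₁.2 + e₂.1 - (r * d + s * b) * e₁.1

/-- If `τ, τ'` are in the upper half-plane and there is a nonzero `λ ∈ ℂ` with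
`λ · (ℤ + ℤτ') = ℤ + ℤτ` (as additive subgroups of `ℂ`), then there are integers
`a, b, c, d` with `ad - bc = 1` and `τ' = (aτ + b)/(cτ + d)`. -/
theorem moebius_of_lattices_homothetic (τ τ' : ℂ) (hτ : 0 < τ.im) (hτ' : 0 < τ'.im)
    (lam : ℂ) (hlam : lam ≠ 0)
    (h : AddSubgroup.closure {lam, lam * τ'} = AddSubgroup.closure {(1 : ℂ), τ}) :
    ∃ a b c d : ℤ, a * d - b * c = 1 ∧
      τ' = ((a : ℂ) * τ + b) / ((c : ℂ) * τ + d) := by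
  have coords (x : ℂ) (hx : x = lam ∨ x = lam * τ') : ∃ m n : ℤ, x = m * τ + n := by
    have hmem : x ∈ AddSubgroup.closure {(1 : ℂ), τ} := h ▸ AddSubgroup.subset_closure hx
    obtain ⟨n, m, hnm⟩ := AddSubgroup.mem_closure_pair.mp hmem
    exact ⟨m, n, by simpa [add_comm] using hnm.symm⟩
  obtain ⟨c, d, hcd⟩ := coords lam (.inl rfl)
  obtain ⟨a, b, hab⟩ := coords (lam * τ') (.inr rfl)
  have hτ'_eq : τ' = (a * τ + b) / (c * τ + d) := by
    rw [eq_div_iff (hcd ▸ hlam), ← hab, hcd, mul_comm]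
  have hdet_pos : 0 < a * d - b * c := by
    rw [hτ'_eq] at hτ'
    exact_mod_cast det_pos_of_im_div_linear_pos (a := a) (b := b) (c := c) (d := d) hτ
      (by exact_mod_cast hτ')
  have hunit := isUnit_det_of_closure_pair_eq hτ.ne' h hcd hab
  refine ⟨a, b, c, d, ?_, hτ'_eq⟩
  rcases Int.isUnit_iff.mp hunit with h1 | h1 <;> omega
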